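/- arXiv:2311.18534 — 2 statements merged into one kernel-verified Lean document; each statement's English description precedes it below -/
import Mathlib

section
/- Let E ⊂ ℝ² be a compact convex polygon with vertices v₁, …, v_N and edges the closed segments [vᵢ, vᵢ₊₁] (indices mod N), and let u : E → ℝ be continuous on E, harmonic on the interior of E, with the restriction of u to each closed edge agreeing with an affine function. If u(vᵢ) = 0 for every vertex vᵢ, then u is identically zero on E. -/
/-!
The vertex values fix `u` on every edge, since an affine function vanishing at both ends of a
segment vanishes on it; hence `u = 0` on the boundary of `E`. The weak maximum principle, applied
to `u` and `-u`, then gives `u = 0` on `E`. The maximum principle is proved by perturbation: for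
`ε > 0` the function `u + ε‖·‖²` has Laplacian `2 ε dim > 0`, so it cannot attain its maximum
over the compact set at an interior point, where all second directional derivatives are `≤ 0`.
-/

open RealInnerProductSpace

/-- `u` is harmonic on `U ⊆ ℝ²`: twice (continuously) differentiable on `U` with
`∂²u/∂x₁² + ∂²u/∂x₂² = 0` on `U`. -/
def IsHarmonicOn (u : EuclideanSpace ℝ (Fin 2) → ℝ) (U : Set (EuclideanSpace ℝ (Fin 2))) : Prop :=
  ContDiffOn ℝ 2 u U ∧ ∀ x ∈ U,
    iteratedFDerivWithin ℝ 2 u U x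
      ![EuclideanSpace.single (0 : Fin 2) (1 : ℝ), EuclideanSpace.single (0 : Fin 2) (1 : ℝ)] +
    iteratedFDerivWithin ℝ 2 u U x
      ![EuclideanSpace.single (1 : Fin 2) (1 : ℝ), EuclideanSpace.single (1 : Fin 2) (1 : ℝ)] = 0

open Filter Topology Laplacian InnerProductSpace

theorem IsLocalMax.deriv_deriv_nonpos {f : ℝ → ℝ} {a : ℝ} (hmax : IsLocalMax f a)
    (hf : ContinuousAt f a) : deriv (deriv f) a ≤ 0 := by
  by_contra! hpos
  have hmin : IsLocalMin f a := isLocalMin_of_deriv_deriv_pos hpos hmax.deriv_eq_zero hf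
  have hconst : f =ᶠ[𝓝 a] fun _ => f a :=
    (hmin.and hmax).mono fun x hx => le_antisymm hx.2 hx.1
  have hzero : deriv (deriv f) a = 0 := by
    rw [hconst.deriv.deriv_eq]; simp
  exact hpos.ne' hzero

section
variable {F : Type*} [NormedAddCommGroup F] [NormedSpace ℝ F]

theorem ContDiffAt.iteratedFDeriv_two_eq_deriv_deriv_line {g : F → ℝ} {x : F}
    (hg : ContDiffAt ℝ 2 g x) (y : F) :
    iteratedFDeriv ℝ 2 g x ![y, y] = deriv (deriv fun t : ℝ => g (x + t • y)) 0 := by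
  have hpair : ![y, y] = fun _ => y := by funext j; fin_cases j <;> rfl
  have hline : Tendsto (fun t : ℝ => x + t • y) (𝓝 0) (𝓝 x) :=
    (continuous_const.add (continuous_id.smul continuous_const)).tendsto' _ _ (by simp)
  have hderiv : deriv (fun t : ℝ => g (x + t • y)) =ᶠ[𝓝 0]
      fun t => iteratedFDeriv ℝ 1 g (x + t • y) (fun _ => y) := by
    filter_upwards [hline.eventually (hg.eventually (by simp))] with t ht
    simpa using (ht.of_le (by norm_num) : ContDiffAt ℝ (0 + 1) g _).deriv_fderiv_add_smul
  have hg' : ContDiffAt ℝ (1 + 1) g (x + (0 : ℝ) • y) := by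
    rwa [zero_smul, add_zero, one_add_one_eq_two]
  rw [hpair, hderiv.deriv_eq, hg'.deriv_fderiv_add_smul, zero_smul, add_zero]

theorem IsLocalMax.iteratedFDeriv_two_nonpos {g : F → ℝ} {x : F} (hmax : IsLocalMax g x)
    (hg : ContDiffAt ℝ 2 g x) (y : F) : iteratedFDeriv ℝ 2 g x ![y, y] ≤ 0 := by
  have hline : ContinuousAt (fun t : ℝ => x + t • y) 0 := by fun_prop
  have hx : x + (0 : ℝ) • y = x := by simp
  rw [hg.iteratedFDeriv_two_eq_deriv_deriv_line]
  refine IsLocalMax.deriv_deriv_nonpos ?_ ?_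
  · exact IsLocalMax.comp_continuous (g := fun t : ℝ => x + t • y) (by rwa [hx]) hline
  · exact ContinuousAt.comp (g := g) (by rw [hx]; exact hg.continuousAt) hline
end

section
variable {E : Type*} [NormedAddCommGroup E] [InnerProductSpace ℝ E] [FiniteDimensional ℝ E]

theorem IsLocalMax.laplacian_nonpos {g : E → ℝ} {x : E} (hmax : IsLocalMax g x)
    (hg : ContDiffAt ℝ 2 g x) : Δ g x ≤ 0 := by
  rw [laplacian_eq_iteratedFDeriv_stdOrthonormalBasis]
  exact Finset.sum_nonpos fun i _ => hmax.iteratedFDeriv_two_nonpos hg _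

theorem laplacian_norm_sq (x : E) :
    Δ (fun y : E => ‖y‖ ^ 2) x = 2 * Module.finrank ℝ E := by
  have hline (y : E) : deriv (deriv fun t : ℝ => ‖x + t • y‖ ^ 2) 0 = 2 * ‖y‖ ^ 2 := by
    have hpoly : (fun t : ℝ => ‖x + t • y‖ ^ 2) =
        fun t => ‖x‖ ^ 2 + 2 * ⟪x, y⟫ * t + ‖y‖ ^ 2 * t ^ 2 := by
      ext t
      rw [norm_add_sq_real, real_inner_smul_right, norm_smul, mul_pow, Real.norm_eq_abs, sq_abs]
      ring
    have hderiv : deriv (fun t : ℝ => ‖x‖ ^ 2 + 2 * ⟪x, y⟫ * t + ‖y‖ ^ 2 * t ^ 2) =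
        fun t => 2 * ⟪x, y⟫ + 2 * ‖y‖ ^ 2 * t := by
      ext t
      refine HasDerivAt.deriv ?_
      convert (((hasDerivAt_id t).const_mul (2 * ⟪x, y⟫)).const_add (‖x‖ ^ 2)).fun_add
        ((hasDerivAt_pow 2 t).const_mul (‖y‖ ^ 2)) using 1
      simp only [id]
      ring
    rw [hpoly, hderiv]
    simp
  have hcd : ContDiffAt ℝ 2 (fun y : E => ‖y‖ ^ 2) x := (contDiff_norm_sq ℝ).contDiffAt
  rw [laplacian_eq_iteratedFDeriv_stdOrthonormalBasis]
  simp only [hcd.iteratedFDeriv_two_eq_deriv_deriv_line, hline, OrthonormalBasis.norm_eq_one]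
  simp [mul_comm]

variable [Nontrivial E]

theorem InnerProductSpace.HarmonicOnNhd.exists_mem_frontier_isMaxOn_add_mul_norm_sq
    {u : E → ℝ} {K : Set E} (hu : HarmonicOnNhd u (interior K)) (hK : IsCompact K)
    (hne : K.Nonempty) (hcont : ContinuousOn u K) {ε : ℝ} (hε : 0 < ε) :
    ∃ x₀ ∈ frontier K, IsMaxOn (fun y => u y + ε * ‖y‖ ^ 2) K x₀ := by
  set w : E → ℝ := fun y => u y + ε * ‖y‖ ^ 2
  have hwcont : ContinuousOn w K := hcont.add (Continuous.continuousOn (by fun_prop))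
  obtain ⟨x₀, hx₀K, hmax⟩ := hK.exists_isMaxOn hne hwcont
  refine ⟨x₀, ?_, hmax⟩
  rw [hK.isClosed.frontier_eq]
  refine ⟨hx₀K, fun hx₀ => ?_⟩
  have hnorm : ContDiffAt ℝ 2 (fun y : E => ‖y‖ ^ 2) x₀ := (contDiff_norm_sq ℝ).contDiffAt
  have hεnorm : ContDiffAt ℝ 2 (ε • fun y : E => ‖y‖ ^ 2) x₀ := hnorm.const_smul ε
  have hw : ContDiffAt ℝ 2 w x₀ := (hu x₀ hx₀).1.add hεnorm
  have hlap_nonpos : Δ w x₀ ≤ 0 :=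
    (hmax.isLocalMax (mem_interior_iff_mem_nhds.mp hx₀)).laplacian_nonpos hw
  have hlap : Δ w x₀ = ε * (2 * Module.finrank ℝ E) := by
    change Δ (u + ε • fun y : E => ‖y‖ ^ 2) x₀ = _
    rw [(hu x₀ hx₀).1.laplacian_add hεnorm, laplacian_smul ε hnorm,
      (hu x₀ hx₀).2.self_of_nhds, laplacian_norm_sq]
    simp
  have hdim : (0 : ℝ) < Module.finrank ℝ E := by exact_mod_cast Module.finrank_pos
  nlinarith

theorem InnerProductSpace.HarmonicOnNhd.le_of_forall_mem_frontier_le {u : E → ℝ} {K : Set E}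
    (hu : HarmonicOnNhd u (interior K)) (hK : IsCompact K) (hcont : ContinuousOn u K) {c : ℝ}
    (hfr : ∀ x ∈ frontier K, u x ≤ c) :
    ∀ x ∈ K, u x ≤ c := by
  intro x hx
  obtain ⟨R, hR⟩ := hK.isBounded.exists_norm_le
  refine le_of_forall_pos_le_add fun δ hδ => ?_
  set ε := δ / (R ^ 2 + 1)
  have hε : 0 < ε := by positivity
  obtain ⟨x₀, hx₀, hmax⟩ :=
    hu.exists_mem_frontier_isMaxOn_add_mul_norm_sq hK ⟨x, hx⟩ hcont hε
  have hx₀K : x₀ ∈ K := hK.isClosed.frontier_subset hx₀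
  have hbound : ε * ‖x₀‖ ^ 2 ≤ δ := calc
    ε * ‖x₀‖ ^ 2 ≤ ε * (R ^ 2 + 1) := by
      gcongr
      nlinarith [hR x₀ hx₀K, norm_nonneg x₀]
    _ = δ := div_mul_cancel₀ δ (by positivity)
  calc u x ≤ u x + ε * ‖x‖ ^ 2 := by nlinarith
    _ ≤ u x₀ + ε * ‖x₀‖ ^ 2 := hmax hx
    _ ≤ c + δ := add_le_add (hfr x₀ hx₀) hbound

end

theorem IsHarmonicOn.harmonicOnNhd {u : EuclideanSpace ℝ (Fin 2) → ℝ}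
    {U : Set (EuclideanSpace ℝ (Fin 2))} (hU : IsOpen U) (hu : IsHarmonicOn u U) :
    HarmonicOnNhd u U := by
  intro x hx
  refine ⟨hu.1.contDiffAt (hU.mem_nhds hx), ?_⟩
  filter_upwards [hU.mem_nhds hx] with y hy
  rw [laplacian_eq_iteratedFDeriv_orthonormalBasis u (EuclideanSpace.basisFun (Fin 2) ℝ)]
  simpa [Fin.sum_univ_two, iteratedFDerivWithin_of_isOpen 2 hU hy] using hu.2 y hy

theorem eq_zero_of_mem_segment_of_eq_inner_add {F : Type*} [NormedAddCommGroup F]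
    [InnerProductSpace ℝ F] {u : F → ℝ} {p q a : F} {b : ℝ}
    (hu : ∀ x ∈ segment ℝ p q, u x = ⟪a, x⟫ + b) (hp : u p = 0) (hq : u q = 0)
    {x : F} (hx : x ∈ segment ℝ p q) : u x = 0 := by
  rw [hu p (left_mem_segment ℝ p q)] at hp
  rw [hu q (right_mem_segment ℝ p q)] at hq
  rw [hu x hx]
  obtain ⟨α, β, -, -, hαβ, rfl⟩ := hx
  rw [inner_add_right, real_inner_smul_right, real_inner_smul_right]
  linear_combination α * hp + β * hq - b * hαβ

theorem statement4_general (N : ℕ) [NeZero N]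
    (v : Fin N → EuclideanSpace ℝ (Fin 2))
    (E : Set (EuclideanSpace ℝ (Fin 2))) (hE : E = convexHull ℝ (Set.range v))
    (hbd : frontier E = ⋃ i : Fin N, segment ℝ (v i) (v (i + 1)))
    (u : EuclideanSpace ℝ (Fin 2) → ℝ)
    (hcont : ContinuousOn u E)
    (hharm : IsHarmonicOn u (interior E))
    (haff : ∀ i : Fin N, ∃ (a : EuclideanSpace ℝ (Fin 2)) (b : ℝ),
      ∀ x ∈ segment ℝ (v i) (v (i + 1)), u x = ⟪a, x⟫ + b)
    (hzero : ∀ i : Fin N, u (v i) = 0) :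
    ∀ x ∈ E, u x = 0 := by
  have hcomp : IsCompact E := hE ▸ (Set.finite_range v).isCompact_convexHull (𝕜 := ℝ)
  have hfrontier : ∀ x ∈ frontier E, u x = 0 := by
    rw [hbd]
    intro x hx
    obtain ⟨i, hxi⟩ := Set.mem_iUnion.mp hx
    obtain ⟨a, b, hab⟩ := haff i
    exact eq_zero_of_mem_segment_of_eq_inner_add hab (hzero i) (hzero (i + 1)) hxi
  have hu := hharm.harmonicOnNhd isOpen_interior
  have hle := hu.le_of_forall_mem_frontier_le hcomp hcont fun x hx => (hfrontier x hx).le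
  have hge := hu.neg.le_of_forall_mem_frontier_le (c := 0) hcomp hcont.neg fun x hx => by
    simp [hfrontier x hx]
  intro x hx
  exact le_antisymm (hle x hx) (neg_nonpos.mp (hge x hx))

/-- unisolvence of the vertex degrees of freedom: let `E ⊆ ℝ²` be a compact
convex polygon with vertices `v 0, …, v (N-1)`, whose boundary is the union of the closed
edges `[v i, v (i+1)]`, and let `u` be continuous on `E`, harmonic on the interior of `E`,
and agreeing with an affine function on each closed edge. If `u` vanishes at every vertex,
then `u` vanishes identically on `E`. -/
theorem statement4 (N : ℕ) [NeZero N] (hN : 3 ≤ N)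
    (v : Fin N → EuclideanSpace ℝ (Fin 2))
    (E : Set (EuclideanSpace ℝ (Fin 2))) (hE : E = convexHull ℝ (Set.range v))
    (hbd : frontier E = ⋃ i : Fin N, segment ℝ (v i) (v (i + 1)))
    (u : EuclideanSpace ℝ (Fin 2) → ℝ)
    (hcont : ContinuousOn u E)
    (hharm : IsHarmonicOn u (interior E))
    (haff : ∀ i : Fin N, ∃ (a : EuclideanSpace ℝ (Fin 2)) (b : ℝ),
      ∀ x ∈ segment ℝ (v i) (v (i + 1)), u x = ⟪a, x⟫ + b)
    (hzero : ∀ i : Fin N, u (v i) = 0) :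
    ∀ x ∈ E, u x = 0 :=
  statement4_general N v E hE hbd u hcont hharm haff hzero
end

section
/- Let V be a real inner product space, W ⊆ V a complete subspace, and P : V → V the orthogonal projection onto W. Let s : V → V → ℝ be a symmetric bilinear form and α⋆, α⋆⋆ positive real constants such that α⋆‖w‖² ≤ s(w, w) ≤ α⋆⋆‖w‖² for every w in the orthogonal complement of W. Define a_h(u, v) = ⟪P u, P v⟫ + s(u − P u, v − P v). Then for every v ∈ V, min(1, α⋆)·‖v‖² ≤ a_h(v, v) ≤ max(1, α⋆⋆)·‖v‖². -/
open RealInnerProductSpace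

/-!
Split `v = P v + w` with `w = v - P v ∈ Wᗮ`. The consistency term is `‖P v‖²`, the stabilization
term lies between `α⋆‖w‖²` and `α⋆⋆‖w‖²`, and `‖v‖² = ‖P v‖² + ‖w‖²` by Pythagoras, so both
bounds compare two nonnegative weighted sums of `‖P v‖²` and `‖w‖²` coefficientwise.
-/

theorem min_one_mul_add_le {α x y t : ℝ} (hx : 0 ≤ x) (hy : 0 ≤ y) (ht : α * y ≤ t) :
    min 1 α * (x + y) ≤ x + t := by
  nlinarith [min_le_left 1 α, min_le_right 1 α]

theorem add_le_max_one_mul_add {α x y t : ℝ} (hx : 0 ≤ x) (hy : 0 ≤ y) (ht : t ≤ α * y) :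
    x + t ≤ max 1 α * (x + y) := by
  nlinarith [le_max_left 1 α, le_max_right 1 α]

theorem Submodule.norm_sq_eq_norm_sq_starProjection_add_norm_sq_sub {V : Type*}
    [NormedAddCommGroup V] [InnerProductSpace ℝ V] (W : Submodule ℝ V)
    [W.HasOrthogonalProjection] (v : V) :
    ‖v‖ ^ 2 = ‖W.starProjection v‖ ^ 2 + ‖v - W.starProjection v‖ ^ 2 := by
  rw [← W.starProjection_orthogonal_val]
  exact W.norm_sq_eq_add_norm_sq_starProjection v

theorem statement7_general {V : Type*} [NormedAddCommGroup V] [InnerProductSpace ℝ V]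
    (W : Submodule ℝ V) [CompleteSpace W]
    (s : V →ₗ[ℝ] V →ₗ[ℝ] ℝ)
    (αl αu : ℝ)
    (hs : ∀ w ∈ Wᗮ, αl * ‖w‖ ^ 2 ≤ s w w ∧ s w w ≤ αu * ‖w‖ ^ 2) :
    ∀ v : V,
      min 1 αl * ‖v‖ ^ 2 ≤
        ⟪(Submodule.orthogonalProjectionOnto W v : V), (Submodule.orthogonalProjectionOnto W v : V)⟫ +
          s (v - Submodule.orthogonalProjectionOnto W v) (v - Submodule.orthogonalProjectionOnto W v) ∧
      ⟪(Submodule.orthogonalProjectionOnto W v : V), (Submodule.orthogonalProjectionOnto W v : V)⟫ +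
          s (v - Submodule.orthogonalProjectionOnto W v) (v - Submodule.orthogonalProjectionOnto W v) ≤
        max 1 αu * ‖v‖ ^ 2 := by
  intro v
  obtain ⟨hlower, hupper⟩ := hs _ (W.sub_starProjection_mem_orthogonal v)
  rw [real_inner_self_eq_norm_sq, W.norm_sq_eq_norm_sq_starProjection_add_norm_sq_sub v]
  exact ⟨min_one_mul_add_le (sq_nonneg _) (sq_nonneg _) hlower,
    add_le_max_one_mul_add (sq_nonneg _) (sq_nonneg _) hupper⟩

/-- spectral equivalence / coercivity of the VEM discrete bilinear form:
let `V` be a real inner product space, `W` a complete subspace with orthogonal projection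
`P`, and `s` a symmetric bilinear form with `α⋆‖w‖² ≤ s w w ≤ α⋆⋆‖w‖²` for every `w` in
the orthogonal complement of `W`, where `α⋆, α⋆⋆ > 0`. Then with
`a_h u v = ⟪P u, P v⟫ + s (u - P u) (v - P v)` one has
`min 1 α⋆ · ‖v‖² ≤ a_h v v ≤ max 1 α⋆⋆ · ‖v‖²` for every `v ∈ V`. -/
theorem statement7 {V : Type*} [NormedAddCommGroup V] [InnerProductSpace ℝ V]
    (W : Submodule ℝ V) [CompleteSpace W]
    (s : V →ₗ[ℝ] V →ₗ[ℝ] ℝ) (hsymm : ∀ u v : V, s u v = s v u)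
    (αl αu : ℝ) (hαl : 0 < αl) (hαu : 0 < αu)
    (hs : ∀ w ∈ Wᗮ, αl * ‖w‖ ^ 2 ≤ s w w ∧ s w w ≤ αu * ‖w‖ ^ 2) :
    ∀ v : V,
      min 1 αl * ‖v‖ ^ 2 ≤
        ⟪(Submodule.orthogonalProjectionOnto W v : V), (Submodule.orthogonalProjectionOnto W v : V)⟫ +
          s (v - Submodule.orthogonalProjectionOnto W v) (v - Submodule.orthogonalProjectionOnto W v) ∧
      ⟪(Submodule.orthogonalProjectionOnto W v : V), (Submodule.orthogonalProjectionOnto W v : V)⟫ +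
          s (v - Submodule.orthogonalProjectionOnto W v) (v - Submodule.orthogonalProjectionOnto W v) ≤
        max 1 αu * ‖v‖ ^ 2 :=
  statement7_general W s αl αu hs
end
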